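/- arXiv:1605.00987 — 5 statements merged into one kernel-verified Lean document; each statement's English description precedes it below -/
import Mathlib

section
/- Let z be a positive integer, and let p, q, u be natural numbers. Set x0 = ⌈2^q·u / z⌉, y0 = z·x0 − 2^q·u, x1 = ⌊2^q·u / z⌋, y1 = z·x1 − 2^p, x2 = x1 + 1, and y2 = z·x2 − 2^p. Then every pair of integers (x̂, ŷ) satisfying z·x̂ ≡ 2^q·u + ŷ (mod 2^p) can be written as x̂ = x0 + α1·x1 + α2·x2 and ŷ = y0 + α1·y1 + α2·y2 for some integers α1, α2. -/
/-- Converse direction of Theorem 1 (Zhang, "A practical attack to Bouftass's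
cryptosystem"): every integer solution of `z·x ≡ 2^q·u + y (mod 2^p)` has the
stated parametric form. -/
theorem stmt_1 (z : ℤ) (hz : 0 < z) (p q u : ℕ)
    (x0 y0 x1 y1 x2 y2 : ℤ)
    (hx0 : x0 = ⌈((2 ^ q * u : ℤ) : ℚ) / (z : ℚ)⌉)
    (hy0 : y0 = z * x0 - 2 ^ q * u)
    (hx1 : x1 = ⌊((2 ^ q * u : ℤ) : ℚ) / (z : ℚ)⌋)
    (hy1 : y1 = z * x1 - 2 ^ p)
    (hx2 : x2 = x1 + 1)
    (hy2 : y2 = z * x2 - 2 ^ p)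
    (xhat yhat : ℤ)
    (h : z * xhat ≡ 2 ^ q * u + yhat [ZMOD 2 ^ p]) :
    ∃ α1 α2 : ℤ,
      xhat = x0 + α1 * x1 + α2 * x2 ∧ yhat = y0 + α1 * y1 + α2 * y2 := by
  have h' : ((2 : ℤ) ^ p) ∣ (2 ^ q * u + yhat) - z * xhat := by
    have := (Int.ModEq.dvd h)
    simpa using this
  obtain ⟨k, hk⟩ := h'
  refine ⟨-k - (xhat - x0 + k * x1), xhat - x0 + k * x1, ?_, ?_⟩ <;>
    subst hx2 hy0 hy1 hy2 <;> ring_nf <;> linarith [hk]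
end

section
/- Let z be a positive integer, and let p, q, u be natural numbers. Set x0 = ⌈2^q·u / z⌉, y0 = z·x0 − 2^q·u, x1 = ⌊2^q·u / z⌋, y1 = z·x1 − 2^p, x2 = x1 + 1, and y2 = z·x2 − 2^p. Then a pair of integers (x, y) satisfies the congruence z·x ≡ 2^q·u + y (mod 2^p) if and only if there exist integers α1, α2 such that x = x0 + α1·x1 + α2·x2 and y = y0 + α1·y1 + α2·y2. -/
/-- Theorem 1 (Zhang, "A practical attack to Bouftass's cryptosystem"):
an integer pair `(x, y)` solves `z·x ≡ 2^q·u + y (mod 2^p)` if and only if it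
has the stated parametric form. -/
theorem stmt_2 (z : ℤ) (hz : 0 < z) (p q u : ℕ)
    (x0 y0 x1 y1 x2 y2 : ℤ)
    (hx0 : x0 = ⌈((2 ^ q * u : ℤ) : ℚ) / (z : ℚ)⌉)
    (hy0 : y0 = z * x0 - 2 ^ q * u)
    (hx1 : x1 = ⌊((2 ^ q * u : ℤ) : ℚ) / (z : ℚ)⌋)
    (hy1 : y1 = z * x1 - 2 ^ p)
    (hx2 : x2 = x1 + 1)
    (hy2 : y2 = z * x2 - 2 ^ p)
    (x y : ℤ) :
    z * x ≡ 2 ^ q * u + y [ZMOD 2 ^ p] ↔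
      ∃ α1 α2 : ℤ,
        x = x0 + α1 * x1 + α2 * x2 ∧ y = y0 + α1 * y1 + α2 * y2 := by
  subst hy0 hy1 hy2 hx2
  rw [Int.modEq_iff_dvd]
  constructor
  · rintro ⟨k, hk⟩
    refine ⟨-k - (x - x0 + k * x1), x - x0 + k * x1, by ring, by linear_combination hk⟩
  · rintro ⟨α1, α2, hx, hy⟩
    exact ⟨-(α1 + α2), by rw [hx, hy]; ring⟩
end

section
/- Let z be a positive integer, let p be a natural number, and let a be any integer. Then the ℤ-submodule of ℤ² generated by the two vectors (a, z·a − 2^p) and (a + 1, z·(a + 1) − 2^p) equals the set L = {(x, y) ∈ ℤ² : z·x ≡ y (mod 2^p)}. -/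
/-- The ℤ-submodule of ℤ² generated by `(a, z·a − 2^p)` and
`(a+1, z·(a+1) − 2^p)` is exactly the lattice of solutions of the homogeneous
congruence `z·x ≡ y (mod 2^p)`. -/
theorem stmt_3 (z : ℤ) (hz : 0 < z) (p : ℕ) (a : ℤ) :
    (Submodule.span ℤ
        ({(a, z * a - 2 ^ p), (a + 1, z * (a + 1) - 2 ^ p)} : Set (ℤ × ℤ)) :
      Set (ℤ × ℤ)) =
    {w : ℤ × ℤ | z * w.1 ≡ w.2 [ZMOD 2 ^ p]} := by
  ext w
  simp only [SetLike.mem_coe, Submodule.mem_span_pair, Set.mem_setOf_eq]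
  rw [Int.modEq_iff_dvd]
  constructor
  · rintro ⟨m, n, rfl⟩
    refine ⟨-(m + n), ?_⟩
    simp [Prod.smul_def, smul_eq_mul]
    ring
  · rintro ⟨k, hk⟩
    refine ⟨-k - w.1 - k * a, w.1 + k * a, ?_⟩
    have hy : w.2 = z * w.1 + 2 ^ p * k := by linarith
    refine Prod.ext ?_ ?_
    · simp [Prod.smul_def, smul_eq_mul]; ring
    · simp [Prod.smul_def, smul_eq_mul, hy]; ring
end

section
/- Let E be a real inner product space, let u1, u2 ∈ E, and let c be a nonzero integer such that |⟨u1, u2⟩ − c·‖u2‖²| < (1/2)·‖u2‖². Then ‖u1 − c·u2‖ < ‖u1‖. -/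
open RealInnerProductSpace

/-- Norm-decrease property of one step of Gaussian lattice reduction: if the
nonzero integer `c` satisfies `|⟨u1, u2⟩ − c·‖u2‖²| < (1/2)·‖u2‖²`, then
`‖u1 − c·u2‖ < ‖u1‖`. -/
theorem stmt_5 {E : Type*} [NormedAddCommGroup E] [InnerProductSpace ℝ E]
    (u1 u2 : E) (c : ℤ) (hc : c ≠ 0)
    (h : |⟪u1, u2⟫ - (c : ℝ) * ‖u2‖ ^ 2| < (1 / 2) * ‖u2‖ ^ 2) :
    ‖u1 - (c : ℝ) • u2‖ < ‖u1‖ := by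
  have hcabs : (1 : ℝ) ≤ |(c : ℝ)| := by
    have : (1 : ℤ) ≤ |c| := Int.one_le_abs hc
    exact_mod_cast (by push_cast; exact_mod_cast this : (1:ℝ) ≤ |(c:ℝ)|)
  have habs := abs_lt.mp h
  have key : ‖u1 - (c : ℝ) • u2‖ ^ 2 < ‖u1‖ ^ 2 := by
    rw [@norm_sub_sq_real, real_inner_smul_right, norm_smul]
    rw [mul_pow, Real.norm_eq_abs, sq_abs]
    rcases le_or_gt 0 ((c:ℝ)) with hc0 | hc0
    · have h1 : (1:ℝ) ≤ (c:ℝ) := by rwa [abs_of_nonneg hc0] at hcabs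
      nlinarith [habs.1, habs.2, sq_nonneg ‖u2‖, mul_lt_mul_of_pos_left habs.1 (by linarith : (0:ℝ) < (c:ℝ)), mul_nonneg (by linarith : (0:ℝ) ≤ (c:ℝ) - 1) (mul_nonneg (by linarith : (0:ℝ) ≤ (c:ℝ)) (sq_nonneg ‖u2‖))]
    · have h1 : (c:ℝ) ≤ -1 := by rw [abs_of_neg hc0] at hcabs; linarith
      nlinarith [habs.1, habs.2, sq_nonneg ‖u2‖, mul_lt_mul_of_pos_left habs.2 (by linarith : (0:ℝ) < -(c:ℝ)), mul_nonneg (by linarith : (0:ℝ) ≤ -(c:ℝ) - 1) (mul_nonneg (by linarith : (0:ℝ) ≤ -(c:ℝ)) (sq_nonneg ‖u2‖))]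
  exact lt_of_pow_lt_pow_left₀ 2 (norm_nonneg _) key
end

section
/- Let E be a real inner product space and let u1, u2 ∈ E satisfy 2·|⟨u1, u2⟩| ≤ ‖u1‖². Let α1, α2, a1, a2, b1 be real numbers such that (a1 − b1)·(2·α1 − a1 − b1) ≥ |a1 − b1| · |α2 − a2|. Then ‖(α1 − a1)·u1 + (α2 − a2)·u2‖ ≤ ‖(α1 − b1)·u1 + (α2 − a2)·u2‖. -/
open RealInnerProductSpace

/-- Key estimate in Case 2 of the proof of Theorem 2: for a Gauss-reduced pair
`u1, u2` (i.e. `2·|⟨u1, u2⟩| ≤ ‖u1‖²`), changing only the first coefficient of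
the approximating lattice point cannot decrease the distance, under the stated
coefficient inequality. -/
theorem stmt_9 {E : Type*} [NormedAddCommGroup E] [InnerProductSpace ℝ E]
    (u1 u2 : E) (hred : 2 * |⟪u1, u2⟫| ≤ ‖u1‖ ^ 2)
    (α1 α2 a1 a2 b1 : ℝ)
    (hcoef : (a1 - b1) * (2 * α1 - a1 - b1) ≥ |a1 - b1| * |α2 - a2|) :
    ‖(α1 - a1) • u1 + (α2 - a2) • u2‖ ≤ ‖(α1 - b1) • u1 + (α2 - a2) • u2‖ := by
  have hsq : ‖(α1 - a1) • u1 + (α2 - a2) • u2‖ ^ 2 ≤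
      ‖(α1 - b1) • u1 + (α2 - a2) • u2‖ ^ 2 := by
    rw [norm_add_sq_real, norm_add_sq_real]
    simp only [norm_smul, real_inner_smul_left, real_inner_smul_right, Real.norm_eq_abs]
    have h1 : |(a1 - b1) * (α2 - a2)| = |a1 - b1| * |α2 - a2| := abs_mul _ _
    have h2 : -(|(a1 - b1) * (α2 - a2)| * |⟪u1, u2⟫|) ≤
        (a1 - b1) * (α2 - a2) * ⟪u1, u2⟫ := by
      rw [← abs_mul]; exact neg_abs_le _
    have hN : (0:ℝ) ≤ ‖u1‖ ^ 2 := sq_nonneg _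
    have h4 : (0:ℝ) ≤ |(a1 - b1) * (α2 - a2)| := abs_nonneg _
    have h5 : |a1 - b1| * |α2 - a2| * ‖u1‖ ^ 2 +
        2 * ((a1 - b1) * (α2 - a2) * ⟪u1, u2⟫) ≥ 0 := by
      nlinarith [mul_nonneg h4 (sub_nonneg.2 hred), abs_nonneg (⟪u1, u2⟫ : ℝ)]
    have hmain : (a1 - b1) * (2 * α1 - a1 - b1) * ‖u1‖ ^ 2 +
        2 * ((a1 - b1) * (α2 - a2) * ⟪u1, u2⟫) ≥ 0 := by
      nlinarith [mul_nonneg (sub_nonneg.2 hcoef) hN]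
    simp only [mul_pow, sq_abs]
    nlinarith [hmain]
  exact (pow_le_pow_iff_left₀ (norm_nonneg _) (norm_nonneg _) two_ne_zero).mp hsq
end
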